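/- arXiv:1405.3778 — 2 statements merged into one kernel-verified Lean document; each statement's English description precedes it below -/
import Mathlib

section
/- Let (A, m) be a local ring and E a finitely generated A-module. Then E is free of rank n if and only if both (1) the vector space dimension of E ⊗_A A/m over A/m equals n, and (2) the (n-1)-th Fitting ideal Fitt_{n-1}(E) is the zero ideal. -/
/-!
If `E ≅ Aⁿ`, every presentation `π : A^N ↠ E` splits, so `ker π` is a finite projective, hence
free, module of rank `N - n` over the local ring `A`; any `N - n + 1` relations then factor
through `A^(N-n)`, so their minors vanish. Conversely, Nakayama's lemma turns a basis of
`E ⊗ A/𝔪` into a surjection `π : Aⁿ ↠ E`; the entries of a relation of `π` are `1 × 1` minors,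
hence lie in `Fitt_{n-1}(E) = 0`, so `π` is an isomorphism.
-/

open scoped TensorProduct

/-- The `n`-th Fitting ideal of a module `M` over a commutative ring `A` (with `n : ℤ`
to accommodate the convention `Fitt_{-1}(M) = 0`): it is generated by the determinants of
all `(N - n) × (N - n)` matrices whose columns are relations, i.e. elements of the kernel
of a surjection `A^N → M`, evaluated at a choice of `N - n` rows.  (For `N - n > N` a row
must repeat so the determinants vanish, and for `n ≥ N` the empty determinant is `1`; this
reproduces the standard conventions, and the ideal is independent of the presentation.) -/
noncomputable def fittingIdeal (A : Type*) [CommRing A] (M : Type*) [AddCommGroup M]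
    [Module A M] (n : ℤ) : Ideal A :=
  ⨆ (N : ℕ) (π : ((Fin N → A) →ₗ[A] M)) (_ : Function.Surjective π),
    Ideal.span { x | ∃ (r : Fin ((N - n).toNat) → Fin N)
      (v : Fin ((N - n).toNat) → LinearMap.ker π),
      x = Matrix.det (Matrix.of fun i j => ((v j : Fin N → A) (r i))) }

open Module

theorem Matrix.det_mul_eq_zero_of_card_lt {A m ι : Type*} [CommRing A] [Fintype m]
    [DecidableEq m] [Fintype ι] (h : Fintype.card ι < Fintype.card m)
    (B : Matrix m ι A) (C : Matrix ι m A) : (B * C).det = 0 := by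
  obtain ⟨e⟩ : Nonempty (ι ⊕ Fin (Fintype.card m - Fintype.card ι) ≃ m) := by
    rw [← Fintype.card_eq, Fintype.card_sum, Fintype.card_fin]
    omega
  -- pad `B` with zero columns and `C` with zero rows to square matrices
  have hpad : B * C =
      (fromCols B 0).submatrix _root_.id e.symm * (fromRows C 0).submatrix e.symm _root_.id := by
    rw [Matrix.submatrix_mul_equiv, fromCols_mul_fromRows, Matrix.zero_mul, add_zero,
      Matrix.submatrix_id_id]
  rw [hpad, det_mul, det_eq_zero_of_column_eq_zero (e (.inr ⟨0, by omega⟩)) (by simp), zero_mul]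

theorem Matrix.det_of_mem_eq_zero_of_finrank_lt {A ι : Type*} [CommRing A] [Nontrivial A]
    {K : Submodule A (ι → A)} [Module.Free A K] [Module.Finite A K] {T : ℕ}
    (hT : finrank A K < T) (r : Fin T → ι) (v : Fin T → K) :
    (Matrix.of fun i j => (v j : ι → A) (r i)).det = 0 := by
  let b := Module.Free.chooseBasis A K
  have hfactor : Matrix.of (fun i j => (v j : ι → A) (r i)) =
      Matrix.of (fun i t => (b t : ι → A) (r i)) * Matrix.of (fun t j => b.repr (v j) t) := by
    ext i j
    have hv := congrArg (fun x : K => (x : ι → A) (r i)) (b.sum_repr (v j))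
    simp only [Submodule.coe_sum, Submodule.coe_smul, Finset.sum_apply, Pi.smul_apply,
      smul_eq_mul] at hv
    simp [Matrix.mul_apply, ← hv, mul_comm]
  rw [hfactor]
  exact Matrix.det_mul_eq_zero_of_card_lt
    (by rwa [← finrank_eq_card_chooseBasisIndex, Fintype.card_fin]) _ _

namespace LinearMap

variable {A M P : Type*} [CommRing A] [AddCommGroup M] [Module A M] [AddCommGroup P]
  [Module A P] [Module.Projective A P] (f : M →ₗ[A] P)

/-- A surjection onto a projective module splits. -/
noncomputable def kerProdEquivOfSurjective (hf : Function.Surjective f) :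
    (ker f × P) ≃ₗ[A] M :=
  lequivProdOfRightSplitExact (ker f).injective_subtype (ker f).range_subtype
    (Module.projective_lifting_property f LinearMap.id hf).choose_spec

theorem projective_ker_of_surjective [Module.Projective A M] (hf : Function.Surjective f) :
    Module.Projective A (ker f) :=
  .of_split ((kerProdEquivOfSurjective f hf).toLinearMap ∘ₗ inl A _ P)
    (fst A _ P ∘ₗ (kerProdEquivOfSurjective f hf).symm.toLinearMap) (by ext; simp)

theorem finite_ker_of_surjective [Module.Finite A M] (hf : Function.Surjective f) :
    Module.Finite A (ker f) :=
  .of_surjective (fst A _ P ∘ₗ (kerProdEquivOfSurjective f hf).symm.toLinearMap)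
    (Prod.fst_surjective.comp (kerProdEquivOfSurjective f hf).symm.surjective)

variable [IsLocalRing A] [Module.Finite A M] [Module.Projective A M]

theorem free_ker_of_surjective (hf : Function.Surjective f) : Module.Free A (ker f) :=
  have := finite_ker_of_surjective f hf
  have := projective_ker_of_surjective f hf
  Module.free_of_flat_of_isLocalRing

theorem finrank_ker_add_finrank_of_surjective (hf : Function.Surjective f) :
    finrank A (ker f) + finrank A P = finrank A M := by
  have := finite_ker_of_surjective f hf
  have := free_ker_of_surjective f hf
  have : Module.Finite A P := .of_surjective f hf
  have : Module.Free A P := Module.free_of_flat_of_isLocalRing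
  have : Module.Free A M := Module.free_of_flat_of_isLocalRing
  rw [← Module.finrank_prod, (kerProdEquivOfSurjective f hf).finrank_eq]

end LinearMap

section FittingIdeal

variable {A M : Type*} [CommRing A] [AddCommGroup M] [Module A M]

theorem det_mem_fittingIdeal {n : ℤ} {N : ℕ} (π : (Fin N → A) →ₗ[A] M)
    (hπ : Function.Surjective π) (r : Fin (N - n).toNat → Fin N)
    (v : Fin (N - n).toNat → LinearMap.ker π) :
    (Matrix.of fun i j => (v j : Fin N → A) (r i)).det ∈ fittingIdeal A M n :=
  Submodule.mem_iSup_of_mem N <| Submodule.mem_iSup_of_mem π <| Submodule.mem_iSup_of_mem hπ <|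
    Ideal.subset_span ⟨r, v, rfl⟩

theorem fittingIdeal_eq_zero_iff {n : ℤ} : fittingIdeal A M n = 0 ↔
    ∀ (N : ℕ) (π : (Fin N → A) →ₗ[A] M), Function.Surjective π →
      ∀ (r : Fin (N - n).toNat → Fin N) (v : Fin (N - n).toNat → LinearMap.ker π),
        (Matrix.of fun i j => (v j : Fin N → A) (r i)).det = 0 := by
  refine ⟨fun h N π hπ r v => by simpa [h] using det_mem_fittingIdeal π hπ r v, fun h => ?_⟩
  rw [Ideal.zero_eq_bot, eq_bot_iff]
  refine iSup_le fun N => iSup_le fun π => iSup_le fun hπ => ?_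
  rw [Ideal.span_le]
  rintro _ ⟨r, v, rfl⟩
  exact (h N π hπ r v).symm ▸ Submodule.zero_mem _

theorem apply_mem_fittingIdeal_of_mem_ker {N : ℕ} (π : (Fin N → A) →ₗ[A] M)
    (hπ : Function.Surjective π) {w : Fin N → A} (hw : w ∈ LinearMap.ker π) (i : Fin N) :
    w i ∈ fittingIdeal A M ((N : ℤ) - 1) := by
  -- `w i` is the `1 × 1` minor of the relation `w` at row `i`
  have hone : ((N : ℤ) - ((N : ℤ) - 1)).toNat = 1 := by omega
  have := det_mem_fittingIdeal π hπ (fun _ => i) (fun _ => ⟨w, hw⟩) (n := (N : ℤ) - 1)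
  rw [hone] at this
  simpa using this

theorem injective_of_fittingIdeal_eq_zero {N : ℕ} (π : (Fin N → A) →ₗ[A] M)
    (hπ : Function.Surjective π) (hfitt : fittingIdeal A M ((N : ℤ) - 1) = 0) :
    Function.Injective π := by
  refine (injective_iff_map_eq_zero π).mpr fun w hw => funext fun i => ?_
  simpa [hfitt] using apply_mem_fittingIdeal_of_mem_ker π hπ hw i

theorem fittingIdeal_finrank_sub_one_eq_zero [IsLocalRing A] [Module.Finite A M]
    [Module.Projective A M] : fittingIdeal A M ((finrank A M : ℤ) - 1) = 0 :=
  fittingIdeal_eq_zero_iff.mpr fun N π hπ r v => by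
    have := π.finite_ker_of_surjective hπ
    have := π.free_ker_of_surjective hπ
    have hrank := π.finrank_ker_add_finrank_of_surjective hπ
    rw [Module.finrank_fin_fun] at hrank
    exact Matrix.det_of_mem_eq_zero_of_finrank_lt (by omega) r v

end FittingIdeal

theorem IsLocalRing.exists_surjective_of_finrank_residueField_tensorProduct {A M : Type*}
    [CommRing A] [IsLocalRing A] [AddCommGroup M] [Module A M] [Module.Finite A M] {n : ℕ}
    (h : finrank (ResidueField A) (ResidueField A ⊗[A] M) = n) :
    ∃ π : (Fin n → A) →ₗ[A] M, Function.Surjective π := by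
  let b := Module.finBasisOfFinrankEq _ _ h
  choose lift hlift using
    TensorProduct.mk_surjective A M (ResidueField A) Ideal.Quotient.mk_surjective
  refine ⟨Fintype.linearCombination A (fun i => lift (b i)), ?_⟩
  rw [← LinearMap.range_eq_top, Fintype.range_linearCombination]
  exact span_eq_top_of_tmul_eq_basis _ b fun i => hlift (b i)

/-- Let `(A, 𝔪)` be a local ring and `E` a finitely generated `A`-module.
Then `E` is free of rank `n` if and only if (1) `dim_{A/𝔪}(E ⊗_A A/𝔪) = n` and
(2) the Fitting ideal `Fitt_{n-1}(E)` is zero. -/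
theorem free_of_rank_iff_fitting (A : Type*) [CommRing A] [IsLocalRing A]
    (E : Type*) [AddCommGroup E] [Module A E] [Module.Finite A E] (n : ℕ) :
    Nonempty (E ≃ₗ[A] (Fin n → A)) ↔
      (Module.finrank (IsLocalRing.ResidueField A) (IsLocalRing.ResidueField A ⊗[A] E) = n ∧
        fittingIdeal A E ((n : ℤ) - 1) = 0) := by
  constructor
  · rintro ⟨e⟩
    have : Module.Projective A E := .of_equiv e.symm
    have hrank : finrank A E = n := by rw [e.finrank_eq, Module.finrank_fin_fun]
    refine ⟨?_, hrank ▸ fittingIdeal_finrank_sub_one_eq_zero⟩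
    rw [(e.baseChange A (IsLocalRing.ResidueField A) _ _).finrank_eq, Module.finrank_baseChange,
      Module.finrank_fin_fun]
  · rintro ⟨hfibre, hfitt⟩
    obtain ⟨π, hπ⟩ := IsLocalRing.exists_surjective_of_finrank_residueField_tensorProduct hfibre
    exact ⟨(LinearEquiv.ofBijective π ⟨injective_of_fittingIdeal_eq_zero π hπ hfitt, hπ⟩).symm⟩
end

section
/- Let A be a local ring, S = A[X,Y], F = S^p, R ⊆ F a graded submodule, and suppose R_m is free with basis g_1,...,g_t where t = p(m+1) - n, and R_{m+1} is free of rank p(m+2) - n with basis X·g_1,...,X·g_t, Y·g_1,...,Y·g_p (after reordering the g_i). Then R_{m+2} is generated by the p(m+3) - n elements X²g_1,...,X²g_t, XY·g_1,...,XY·g_p, Y²·g_1,...,Y²·g_p. -/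
noncomputable section

open MvPolynomial

variable (A : Type*) [CommRing A]

/-- `S = A[X,Y]`, realized as `MvPolynomial (Fin 2) A`. -/
local notation "S" => MvPolynomial (Fin 2) A

/-- The degree-`m` graded piece of `F = S^p`: tuples of degree-`m` forms. -/
def pieceF (p m : ℕ) : Submodule A (Fin p → MvPolynomial (Fin 2) A) :=
  Submodule.pi Set.univ (fun _ => MvPolynomial.homogeneousSubmodule (Fin 2) A m)

/-- Let `A` be a local ring, `S = A[X,Y]`, `F = S^p`, `R ⊆ F` a graded
submodule.  Suppose `R_m` is free with basis `g_1, …, g_t`, `t = p(m+1) - n`, and that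
`R_{m+1}` is free of rank `p(m+2) - n` with basis
`X·g_1, …, X·g_t, Y·g_1, …, Y·g_p` (after reordering the `g_i`).  Then `R_{m+2}`
(spanned by `X` and `Y` times `R_{m+1}`) is generated by the `p(m+3) - n` elements
`X²g_1, …, X²g_t, XY·g_1, …, XY·g_p, Y²·g_1, …, Y²·g_p`. -/
theorem span_quadratic_generators
    [IsLocalRing A] (p m n t : ℕ) (hn : n ≤ p * (m + 1)) (ht : t = p * (m + 1) - n)
    (hpt : p ≤ t)
    (R : Submodule (MvPolynomial (Fin 2) A) (Fin p → MvPolynomial (Fin 2) A))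
    (hgraded : ∀ f ∈ R, ∀ k : ℕ,
      (fun i => MvPolynomial.homogeneousComponent k (f i)) ∈ R)
    (g : Fin t → (Fin p → MvPolynomial (Fin 2) A))
    -- `g` is a basis of `R_m`:
    (hgmem : ∀ i, g i ∈ R ∧ g i ∈ pieceF A p m)
    (hgind : LinearIndependent A g)
    (hgspan : Submodule.span A (Set.range g) =
      R.restrictScalars A ⊓ pieceF A p m)
    -- `X·g_1, …, X·g_t, Y·g_1, …, Y·g_p` is a basis of `R_{m+1}`:
    (hbind : LinearIndependent A
      (Sum.elim (fun i : Fin t => (X 0 : S) • g i)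
        (fun j : Fin p => (X 1 : S) • g (Fin.castLE hpt j))))
    (hbspan : Submodule.span A
        (Set.range (Sum.elim (fun i : Fin t => (X 0 : S) • g i)
          (fun j : Fin p => (X 1 : S) • g (Fin.castLE hpt j)))) =
      R.restrictScalars A ⊓ pieceF A p (m + 1))
    -- `R_{m+2}` is spanned by `X` and `Y` times `R_{m+1}`:
    (hmult : R.restrictScalars A ⊓ pieceF A p (m + 2) =
      Submodule.span A
        ((fun v => (X 0 : S) • v) '' ((R : Set _) ∩ (pieceF A p (m + 1) : Set _)) ∪
          (fun v => (X 1 : S) • v) '' ((R : Set _) ∩ (pieceF A p (m + 1) : Set _)))) :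
    R.restrictScalars A ⊓ pieceF A p (m + 2) =
      Submodule.span A
        (Set.range (Sum.elim (fun i : Fin t => ((X 0 : S) * X 0) • g i)
          (Sum.elim (fun j : Fin p => ((X 0 : S) * X 1) • g (Fin.castLE hpt j))
            (fun j : Fin p => ((X 1 : S) * X 1) • g (Fin.castLE hpt j))))) := by
 classical
  set b := Sum.elim (fun i : Fin t => (X 0 : S) • g i)
      (fun j : Fin p => (X 1 : S) • g (Fin.castLE hpt j)) with hbdef
  let μ : S → ((Fin p → S) →ₗ[A] (Fin p → S)) := fun c =>
    (LinearMap.lsmul S (Fin p → S) c).restrictScalars A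
  set T := Submodule.span A (Set.range (Sum.elim (fun i : Fin t => ((X 0 : S) * X 0) • g i)
      (Sum.elim (fun j : Fin p => ((X 0 : S) * X 1) • g (Fin.castLE hpt j))
        (fun j : Fin p => ((X 1 : S) * X 1) • g (Fin.castLE hpt j))))) with hTdef
  have hhom : ∀ i (j : Fin p), ((g i) j).IsHomogeneous m := by
    intro i j
    have := (hgmem i).2
    rw [pieceF, Submodule.mem_pi] at this
    exact this j (Set.mem_univ _)
  have hpiece : ∀ (c : S) (d : ℕ), c.IsHomogeneous d → ∀ i, c • g i ∈ pieceF A p (d + m) := by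
    intro c d hc i
    rw [pieceF, Submodule.mem_pi]
    intro j _
    simpa [mem_homogeneousSubmodule, smul_eq_mul] using hc.mul (hhom i j)
  have hYg : ∀ i : Fin t, (X 1 : S) • g i ∈ Submodule.span A (Set.range b) := by
    intro i
    rw [hbspan]
    refine ⟨R.smul_mem _ (hgmem i).1, ?_⟩
    have h := hpiece (X 1) 1 (isHomogeneous_X _ _) i
    rwa [add_comm] at h
  have hXspan : ∀ v ∈ Submodule.span A (Set.range b), (X 0 : S) • v ∈ T := by
    intro v hv
    have hmem : (X 0 : S) • v ∈ (Submodule.span A (Set.range b)).map (μ (X 0)) :=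
      Submodule.mem_map_of_mem hv
    rw [Submodule.map_span] at hmem
    refine Submodule.span_le.mpr ?_ hmem
    rintro x ⟨_, ⟨k, rfl⟩, rfl⟩
    cases k with
    | inl i =>
        refine Submodule.subset_span ⟨Sum.inl i, ?_⟩
        simp [μ, hbdef, smul_smul]
    | inr j =>
        refine Submodule.subset_span ⟨Sum.inr (Sum.inl j), ?_⟩
        simp [μ, hbdef, smul_smul, mul_comm]
  have hXYg : ∀ i : Fin t, ((X 0 : S) * X 1) • g i ∈ T := by
    intro i
    have h := hXspan _ (hYg i)
    rwa [smul_smul] at h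
  apply le_antisymm
  · rw [hmult]
    refine Submodule.span_le.mpr ?_
    rintro x (⟨v, ⟨hvR, hvP⟩, rfl⟩ | ⟨v, ⟨hvR, hvP⟩, rfl⟩)
    · exact hXspan v (by rw [hbspan]; exact ⟨hvR, hvP⟩)
    · have hv : v ∈ Submodule.span A (Set.range b) := by rw [hbspan]; exact ⟨hvR, hvP⟩
      have hmem : (X 1 : S) • v ∈ (Submodule.span A (Set.range b)).map (μ (X 1)) :=
        Submodule.mem_map_of_mem hv
      rw [Submodule.map_span] at hmem
      refine Submodule.span_le.mpr ?_ hmem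
      rintro x ⟨_, ⟨k, rfl⟩, rfl⟩
      cases k with
      | inl i =>
          have heq : (μ (X 1)) (b (Sum.inl i)) = ((X 0 : S) * X 1) • g i := by
            simp only [μ, hbdef, LinearMap.restrictScalars_apply, LinearMap.lsmul_apply,
              Sum.elim_inl, smul_smul]
            ring_nf
          rw [heq]
          exact hXYg i
      | inr j =>
          refine Submodule.subset_span ⟨Sum.inr (Sum.inr j), ?_⟩
          simp [μ, hbdef, smul_smul]
  · refine Submodule.span_le.mpr ?_
    rintro x ⟨k, rfl⟩
    have hmem2 : ∀ (c : S), c.IsHomogeneous 2 → ∀ (i : Fin t),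
        c • g i ∈ R.restrictScalars A ⊓ pieceF A p (m + 2) := by
      intro c hc i
      refine ⟨R.smul_mem _ (hgmem i).1, ?_⟩
      have h := hpiece c 2 hc i
      rwa [add_comm] at h
    rcases k with i | j | j
    · exact hmem2 _ ((isHomogeneous_X _ _).mul (isHomogeneous_X _ _)) i
    · exact hmem2 _ ((isHomogeneous_X _ _).mul (isHomogeneous_X _ _)) _
    · exact hmem2 _ ((isHomogeneous_X _ _).mul (isHomogeneous_X _ _)) _


end
end
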